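/- arXiv:2307.02121 — 4 statements merged into one kernel-verified Lean document; each statement's English description precedes it below -/
import Mathlib

section
/- Let a⁺ and a be linear operators on a space of sequences (indexed by ℕ) such that a⁺ raises the index and a lowers it (analogues of creation and annihilation operators), and suppose the bilinear pairing (b, f) = ∑ₙ (1/n!) ⟨bₙ, fₙ⟩ satisfies (a⁺ b, f) = (b, a f). Then (b, f) = (e^{-a⁺} b, e^{a} f) whenever all series converge, where e^{±a⁺} and e^{a} are defined by their exponential series (which terminate componentwise). -/
/-!
Both exponentials are polynomials in the respective operators, truncated where the series
terminate. Adjointness moves `e^{-a⁺}` across the pairing as `e^{-a}`, so the right-hand side is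
`p b (P(a) f)` with `P` the product of the truncations of `e^{-X}` and `e^{X}`. Since
`e^{-X} e^{X} = 1`, `P - 1` is divisible by `X^(min N M)`, and `p b (X^k(a) g) = p (X^k(a⁺) b) g`
vanishes for `k ≥ N`, while `X^k(a) f` vanishes for `k ≥ M`.
-/

open Polynomial

namespace Polynomial

variable {R : Type*} [CommRing R]

theorem X_pow_dvd_trunc_mul_trunc_sub {φ ψ : PowerSeries R} {Q : R[X]}
    (hQ : (Q : PowerSeries R) = φ * ψ) {n N M : ℕ} (hN : n ≤ N) (hM : n ≤ M) :
    X ^ n ∣ PowerSeries.trunc N φ * PowerSeries.trunc M ψ - Q := by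
  refine X_pow_dvd_iff.mpr fun d hd => ?_
  rw [coeff_sub, ← coeff_coe, ← coeff_coe, coe_mul, hQ,
    ← PowerSeries.coeff_mul_eq_coeff_trunc_mul_trunc₂ φ ψ (by omega) (by omega), sub_self]

variable {V : Type*} [AddCommGroup V] [Module R V]

theorem aeval_apply_eq_zero_of_X_pow_dvd (a : Module.End R V) {P : R[X]} {n : ℕ} {v : V}
    (hP : X ^ n ∣ P) (hv : (a ^ n) v = 0) : aeval a P v = 0 := by
  obtain ⟨S, rfl⟩ := hP
  rw [mul_comm, map_mul, map_pow, aeval_X, Module.End.mul_apply, hv, map_zero]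

theorem aeval_trunc_apply (a : Module.End R V) (φ : PowerSeries R) (n : ℕ) (v : V) :
    aeval a (PowerSeries.trunc n φ) v =
      ∑ k ∈ Finset.range n, PowerSeries.coeff k φ • (a ^ k) v := by
  simp only [aeval_def, PowerSeries.eval₂_trunc_eq_sum_range, LinearMap.sum_apply,
    Module.End.mul_apply, Module.algebraMap_end_apply]

variable {W U : Type*} [AddCommGroup W] [Module R W] [AddCommGroup U] [Module R U]
  {aP : Module.End R V} {a : Module.End R W} {p : V →ₗ[R] W →ₗ[R] U}

theorem pairing_aeval_of_adjoint (hadj : ∀ b f, p (aP b) f = p b (a f)) (P : R[X]) (b : V)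
    (f : W) : p (aeval aP P b) f = p b (aeval a P f) := by
  induction P using Polynomial.induction_on generalizing b f with
  | C r => simp [Module.algebraMap_end_apply]
  | add P Q hP hQ => simp only [map_add, LinearMap.add_apply, hP, hQ]
  | monomial n r ih =>
    rw [pow_succ, ← mul_assoc, map_mul, Module.End.mul_apply, aeval_X, ih, hadj, ← X_mul,
      map_mul (aeval a) X, aeval_X, Module.End.mul_apply]

theorem pairing_aeval_eq_of_X_pow_dvd_sub (hadj : ∀ b f, p (aP b) f = p b (a f)) {b : V} {f : W}
    {N M : ℕ} (hb : (aP ^ N) b = 0) (hf : (a ^ M) f = 0) {P Q : R[X]}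
    (hPQ : X ^ min N M ∣ P - Q) : p b (aeval a P f) = p b (aeval a Q f) := by
  rw [← sub_eq_zero, ← map_sub, ← LinearMap.sub_apply, ← map_sub]
  rcases le_total N M with hNM | hMN
  · rw [min_eq_left hNM] at hPQ
    rw [← pairing_aeval_of_adjoint hadj, aeval_apply_eq_zero_of_X_pow_dvd aP hPQ hb, map_zero,
      LinearMap.zero_apply]
  · rw [min_eq_right hMN] at hPQ
    rw [aeval_apply_eq_zero_of_X_pow_dvd a hPQ hf, map_zero]

end Polynomial

namespace PowerSeries

variable {K : Type*} [Field K] [CharZero K]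

theorem coeff_exp_eq_one_div_factorial (k : ℕ) : coeff k (exp K) = 1 / k.factorial := by
  simp

theorem coeff_evalNegHom_exp (k : ℕ) : coeff k (evalNegHom (exp K)) = (-1) ^ k / k.factorial := by
  simp [evalNegHom, div_eq_mul_inv]

end PowerSeries

open PowerSeries in
/-- If `a⁺` and `a` are adjoint with respect to a bilinear pairing `p`, i.e.
`p (a⁺ b) f = p b (a f)`, and the exponential series terminate on `b` and `f`
(so that all series converge), then `p b f = p (e^{-a⁺} b) (e^{a} f)`. -/
theorem pairing_exp_creation_annihilation
    (V W : Type*) [AddCommGroup V] [Module ℝ V] [AddCommGroup W] [Module ℝ W]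
    (aP : V →ₗ[ℝ] V) (a : W →ₗ[ℝ] W) (p : V →ₗ[ℝ] W →ₗ[ℝ] ℝ)
    (hadj : ∀ (b : V) (f : W), p (aP b) f = p b (a f))
    (b : V) (f : W) (N M : ℕ)
    (hb : ∀ k, N ≤ k → (aP ^ k) b = 0) (hf : ∀ k, M ≤ k → (a ^ k) f = 0) :
    p b f = p (∑ k ∈ Finset.range N, ((-1 : ℝ) ^ k / k.factorial) • (aP ^ k) b)
              (∑ k ∈ Finset.range M, ((1 : ℝ) / k.factorial) • (a ^ k) f) := by
  have hexp : Polynomial.X ^ min N M ∣ trunc N (evalNegHom (exp ℝ)) * trunc M (exp ℝ) - 1 :=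
    X_pow_dvd_trunc_mul_trunc_sub (by rw [mul_comm, exp_mul_exp_neg_eq_one, Polynomial.coe_one])
      (min_le_left N M) (min_le_right N M)
  calc p b f = p b (aeval a (trunc N (evalNegHom (exp ℝ)) * trunc M (exp ℝ)) f) := by
        rw [pairing_aeval_eq_of_X_pow_dvd_sub hadj (hb N le_rfl) (hf M le_rfl) hexp, map_one,
          Module.End.one_apply]
    _ = p (aeval aP (trunc N (evalNegHom (exp ℝ))) b) (aeval a (trunc M (exp ℝ)) f) := by
        rw [map_mul, Module.End.mul_apply, pairing_aeval_of_adjoint hadj]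
    _ = _ := by
        simp only [aeval_trunc_apply, coeff_evalNegHom_exp, coeff_exp_eq_one_div_factorial]
end

section
/- Suppose cumulants 𝔄_{1+n}(t) of an isometric group of operators satisfy the bound ‖𝔄_{1+n}(t) b‖ ≤ n! e^{n+2} ‖b‖ for all n ≥ 0. Then the solution expansion Bₛ(t) = ∑_{n=0}^{s} (1/n!) ∑_{j₁≠…≠jₙ} 𝔄_{1+n}(t) B⁰_{s-n} satisfies, in the norm ‖B‖_{C_γ} = max_{s≥0} (γ^s/s!) sup |Bₛ|, the estimate ‖B(t)‖_{C_γ} ≤ e²(1 - γe)^{-1} ‖B(0)‖_{C_γ} provided 0 < γ < e^{-1}. -/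
/-!
Insert the cumulant bound term by term. The `s.descFactorial n = s! / (s-n)!` ordered tuples of
distinct indices together with the factor `1/n!` and the `n!` of the bound turn the weight
`γ^s / s!` of `B_s` into `(γ e)^n` times the weight `γ^(s-n) / (s-n)!` of `B⁰_{s-n}`, so the
weighted norm of the `n`-th term is at most `e² (γ e)^n ‖B⁰‖_{C_γ}`, and the geometric series in
`γ e < 1` sums to `(1 - γ e)⁻¹`.
-/

open Finset Nat

lemma pow_div_factorial_mul_descFactorial {K : Type*} [Field K] [CharZero K] (γ : K)
    {s n : ℕ} (hns : n ≤ s) :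
    γ ^ s / s ! * s.descFactorial n = γ ^ n * (γ ^ (s - n) / (s - n)!) := by
  rw [← factorial_mul_descFactorial hns, cast_mul, ← pow_mul_pow_sub γ hns]
  have : ((s - n)! : K) ≠ 0 := cast_ne_zero.2 (factorial_ne_zero _)
  have : (s.descFactorial n : K) ≠ 0 :=
    cast_ne_zero.2 (descFactorial_eq_zero_iff_lt.not.2 hns.not_gt)
  field_simp

section

variable {𝕜 E F : Type*} [NontriviallyNormedField 𝕜] [SeminormedAddCommGroup E]
  [SeminormedAddCommGroup F] [NormedSpace 𝕜 E] [NormedSpace 𝕜 F]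

lemma norm_sum_apply_le_card_mul {ι : Type*} [Fintype ι] (A : ι → E →L[𝕜] F) {C : ℝ}
    (hA : ∀ i, ‖A i‖ ≤ C) (x : E) : ‖∑ i, A i x‖ ≤ Fintype.card ι * (C * ‖x‖) := by
  calc ‖∑ i, A i x‖ ≤ ∑ _i : ι, C * ‖x‖ :=
        norm_sum_le_of_le _ fun i _ ↦ (A i).le_of_opNorm_le (hA i) x
    _ = Fintype.card ι * (C * ‖x‖) := by rw [sum_const, Finset.card_univ, nsmul_eq_mul]

end

section

variable {E F : Type*} [SeminormedAddCommGroup E] [SeminormedAddCommGroup F]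
  [NormedSpace ℝ E] [NormedSpace ℝ F]

lemma norm_inv_factorial_smul_sum_embedding_le {s n : ℕ} (A : (Fin n ↪ Fin s) → E →L[ℝ] F)
    {C : ℝ} (hA : ∀ j, ‖A j‖ ≤ n ! * C) (x : E) :
    ‖((1 : ℝ) / n !) • ∑ j, A j x‖ ≤ s.descFactorial n * (C * ‖x‖) := by
  have hn : (0 : ℝ) < n ! := cast_pos.2 (factorial_pos n)
  rw [norm_smul, Real.norm_of_nonneg (by positivity), one_div, inv_mul_le_iff₀ hn]
  calc ‖∑ j, A j x‖ ≤ Fintype.card (Fin n ↪ Fin s) * (n ! * C * ‖x‖) :=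
        norm_sum_apply_le_card_mul A hA x
    _ = n ! * (s.descFactorial n * (C * ‖x‖)) := by
        rw [Fintype.card_embedding_eq, Fintype.card_fin, Fintype.card_fin]; ring

lemma weighted_norm_inv_factorial_smul_sum_embedding_le {γ : ℝ} (hγ : 0 ≤ γ) {s n : ℕ}
    (hns : n ≤ s) (A : (Fin n ↪ Fin s) → E →L[ℝ] F) {C : ℝ} (hA : ∀ j, ‖A j‖ ≤ n ! * C)
    (x : E) :
    γ ^ s / s ! * ‖((1 : ℝ) / n !) • ∑ j, A j x‖ ≤ γ ^ n * C * (γ ^ (s - n) / (s - n)! * ‖x‖) :=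
  calc γ ^ s / s ! * ‖((1 : ℝ) / n !) • ∑ j, A j x‖
      ≤ γ ^ s / s ! * (s.descFactorial n * (C * ‖x‖)) := by
        gcongr; exact norm_inv_factorial_smul_sum_embedding_le A hA x
    _ = γ ^ s / s ! * s.descFactorial n * (C * ‖x‖) := by ring
    _ = γ ^ n * C * (γ ^ (s - n) / (s - n)! * ‖x‖) := by
        rw [pow_div_factorial_mul_descFactorial γ hns]; ring

end

/-- If the cumulant operators `𝔄_{1+n}(t)` (here `Op s n j`, acting on the initial
datum `B⁰_{s-n}` inserted at the ordered tuple of distinct indices `j`) satisfy the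
bound `‖𝔄_{1+n}(t) b‖ ≤ n! e^(n+2) ‖b‖`, then the solution expansion
`Bₛ(t) = ∑_{n=0}^{s} (1/n!) ∑_{j₁≠…≠jₙ} 𝔄_{1+n}(t) B⁰_{s-n}` of the dual BBGKY
hierarchy satisfies `‖B(t)‖_{C_γ} ≤ e²(1-γe)⁻¹ ‖B(0)‖_{C_γ}` provided `0 < γ < e⁻¹`. -/
theorem dual_BBGKY_solution_estimate
    (V : ℕ → Type*) [∀ s, NormedAddCommGroup (V s)] [∀ s, NormedSpace ℝ (V s)]
    (γ : ℝ) (hγ0 : 0 < γ) (hγ : γ < (Real.exp 1)⁻¹)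
    (Op : (s : ℕ) → (n : ℕ) → (Fin n ↪ Fin s) → V (s - n) →L[ℝ] V s)
    (hOp : ∀ (s n : ℕ) (j : Fin n ↪ Fin s),
      ‖Op s n j‖ ≤ n.factorial * Real.exp (n + 2))
    (B0 : (s : ℕ) → V s) (M : ℝ)
    (hM : ∀ s : ℕ, γ ^ s / s.factorial * ‖B0 s‖ ≤ M) :
    ∀ s : ℕ, γ ^ s / s.factorial *
        ‖∑ n ∈ Finset.range (s + 1), ((1 : ℝ) / n.factorial) •
            ∑ j : Fin n ↪ Fin s, Op s n j (B0 (s - n))‖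
      ≤ Real.exp 2 * (1 - γ * Real.exp 1)⁻¹ * M := by
  intro s
  have hr1 : γ * Real.exp 1 < 1 := (lt_mul_inv_iff₀ (Real.exp_pos 1)).1 (by rwa [one_mul])
  have hM0 : 0 ≤ M := le_trans (by simp) (hM 0)
  have hgeom : ∑ n ∈ range (s + 1), (γ * Real.exp 1) ^ n ≤ (1 - γ * Real.exp 1)⁻¹ := by
    have := geom_sum_Ico_le_of_lt_one (m := 0) (n := s + 1) (by positivity) hr1
    rwa [← range_eq_Ico, pow_zero, one_div] at this
  have hterm : ∀ n ∈ range (s + 1), γ ^ s / s ! *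
      ‖((1 : ℝ) / n !) • ∑ j, Op s n j (B0 (s - n))‖ ≤ Real.exp 2 * M * (γ * Real.exp 1) ^ n := by
    intro n hn
    have hC : ∀ j, ‖Op s n j‖ ≤ n ! * (Real.exp 1 ^ n * Real.exp 2) := fun j ↦ by
      rw [← Real.exp_nat_mul, ← Real.exp_add, mul_one]; exact hOp s n j
    calc _ ≤ γ ^ n * (Real.exp 1 ^ n * Real.exp 2) * (γ ^ (s - n) / (s - n)! * ‖B0 (s - n)‖) :=
          weighted_norm_inv_factorial_smul_sum_embedding_le hγ0.le
            (mem_range_succ_iff.1 hn) _ hC _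
      _ ≤ γ ^ n * (Real.exp 1 ^ n * Real.exp 2) * M := by gcongr; exact hM _
      _ = Real.exp 2 * M * (γ * Real.exp 1) ^ n := by ring
  calc _ ≤ ∑ n ∈ range (s + 1), γ ^ s / s ! *
          ‖((1 : ℝ) / n !) • ∑ j, Op s n j (B0 (s - n))‖ := by
        rw [← mul_sum]; gcongr; exact norm_sum_le _ _
    _ ≤ Real.exp 2 * M * ∑ n ∈ range (s + 1), (γ * Real.exp 1) ^ n := by
        rw [mul_sum]; exact sum_le_sum hterm
    _ ≤ Real.exp 2 * M * (1 - γ * Real.exp 1)⁻¹ := by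
        gcongr
    _ = Real.exp 2 * (1 - γ * Real.exp 1)⁻¹ * M := by ring
end

section
/- Suppose cumulants 𝔄*_{1+n}(t) of groups of isometric operators on L¹ spaces satisfy ‖𝔄*_{1+n}(t) f_{s+n}‖_{L¹} ≤ n! e^{n+2} ‖f_{s+n}‖_{L¹}. Then for α > e, the series Fₛ(t) = ∑_{n=0}^{∞} (1/n!) ∫ 𝔄*_{1+n}(t) F⁰_{s+n} dx_{s+1}…dx_{s+n} converges in the norm ‖F‖_{L¹_α} = ∑ₙ αⁿ ‖Fₙ‖_{L¹}, and ‖F(t)‖_{L¹_α} ≤ e²(1 - e/α)^{-1} ‖F(0)‖_{L¹_α}. -/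
/-!
Put `q = e / α < 1` and `c m = α ^ m ‖F⁰ m‖`. The bound on the cumulants makes the `(s, n)` term
of the weighted double series at most `e² qⁿ c (s + n)`: the factorial cancels against `1 / n!`
and the weight `α ^ s` is completed to `α ^ (s + n)` at the price of `(e / α)ⁿ`. Summing first
over `s` gives at most `e² qⁿ ∑ c`, and summing the geometric series over `n` gives the bound.
-/

open Function

section ShiftedGeometric

variable {c : ℕ → ℝ} {q : ℝ}

lemma tsum_nat_add_le_tsum (hc0 : ∀ m, 0 ≤ c m) (hc : Summable c) (n : ℕ) :
    ∑' s, c (s + n) ≤ ∑' m, c m :=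
  (hc.comp_injective (add_left_injective n)).tsum_le_tsum_of_inj (· + n) (add_left_injective n)
    (fun m _ => hc0 m) (fun _ => le_rfl) hc

lemma tsum_geometric_mul_nat_add_le (hc0 : ∀ m, 0 ≤ c m) (hc : Summable c) (hq0 : 0 ≤ q)
    (n : ℕ) : ∑' s, q ^ n * c (s + n) ≤ q ^ n * ∑' m, c m := by
  rw [tsum_mul_left]
  exact mul_le_mul_of_nonneg_left (tsum_nat_add_le_tsum hc0 hc n) (pow_nonneg hq0 n)

lemma summable_tsum_geometric_mul_nat_add (hc0 : ∀ m, 0 ≤ c m) (hc : Summable c)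
    (hq0 : 0 ≤ q) (hq1 : q < 1) : Summable fun n => ∑' s, q ^ n * c (s + n) :=
  ((summable_geometric_of_lt_one hq0 hq1).mul_right (∑' m, c m)).of_nonneg_of_le
    (fun n => tsum_nonneg fun _ => mul_nonneg (pow_nonneg hq0 n) (hc0 _))
    (tsum_geometric_mul_nat_add_le hc0 hc hq0)

lemma summable_uncurry_geometric_mul_nat_add (hc0 : ∀ m, 0 ≤ c m) (hc : Summable c)
    (hq0 : 0 ≤ q) (hq1 : q < 1) :
    Summable (uncurry fun s n => q ^ n * c (s + n)) := by
  have hswap : Summable fun p : ℕ × ℕ => q ^ p.1 * c (p.2 + p.1) := by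
    refine (summable_prod_of_nonneg fun p => mul_nonneg (pow_nonneg hq0 _) (hc0 _)).2 ⟨?_, ?_⟩
    · exact fun n => ((hc.comp_injective (add_left_injective n)).mul_left (q ^ n) :
        Summable fun s => q ^ n * c (s + n))
    · exact summable_tsum_geometric_mul_nat_add hc0 hc hq0 hq1
  exact hswap.prod_symm

lemma tsum_tsum_geometric_mul_nat_add_le (hc0 : ∀ m, 0 ≤ c m) (hc : Summable c)
    (hq0 : 0 ≤ q) (hq1 : q < 1) :
    ∑' s, ∑' n, q ^ n * c (s + n) ≤ (1 - q)⁻¹ * ∑' m, c m := by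
  rw [← (summable_uncurry_geometric_mul_nat_add hc0 hc hq0 hq1).tsum_comm]
  calc ∑' n, ∑' s, q ^ n * c (s + n)
      ≤ ∑' n : ℕ, q ^ n * ∑' m, c m :=
        (summable_tsum_geometric_mul_nat_add hc0 hc hq0 hq1).tsum_le_tsum
          (tsum_geometric_mul_nat_add_le hc0 hc hq0)
          ((summable_geometric_of_lt_one hq0 hq1).mul_right _)
    _ = (1 - q)⁻¹ * ∑' m, c m := by rw [tsum_mul_right, tsum_geometric_of_lt_one hq0 hq1]

end ShiftedGeometric

section WeightedDoubleSeries

variable {E : ℕ → Type*} [∀ s, NormedAddCommGroup (E s)] [∀ s, CompleteSpace (E s)]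
  {v : (s : ℕ) → ℕ → E s} {w : ℕ → ℝ} {b : ℕ → ℕ → ℝ}

theorem summable_weighted_norm_tsum_of_le (hw : ∀ s, 0 < w s) (hb : Summable (uncurry b))
    (hv : ∀ s n, w s * ‖v s n‖ ≤ b s n) :
    (∀ s, Summable (v s)) ∧ Summable (fun s => w s * ‖∑' n, v s n‖) ∧
      ∑' s, w s * ‖∑' n, v s n‖ ≤ ∑' s, ∑' n, b s n := by
  have hrow (s : ℕ) : HasSum (fun n => (w s)⁻¹ * b s n) ((w s)⁻¹ * ∑' n, b s n) :=
    (hb.prod_factor s).hasSum.mul_left _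
  have hterm (s n : ℕ) : ‖v s n‖ ≤ (w s)⁻¹ * b s n := (le_inv_mul_iff₀ (hw s)).2 (hv s n)
  have hrow_le (s : ℕ) : w s * ‖∑' n, v s n‖ ≤ ∑' n, b s n :=
    (le_inv_mul_iff₀ (hw s)).1 (tsum_of_norm_bounded (hrow s) (hterm s))
  have hsummable : Summable fun s => w s * ‖∑' n, v s n‖ :=
    hb.prod.of_nonneg_of_le (fun s => mul_nonneg (hw s).le (norm_nonneg _)) hrow_le
  exact ⟨fun s => (hrow s).summable.of_norm_bounded (hterm s), hsummable,
    hsummable.tsum_le_tsum hrow_le hb.prod⟩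

end WeightedDoubleSeries

lemma weighted_norm_cumulant_term_le {E F : Type*} [NormedAddCommGroup E] [NormedSpace ℝ E]
    [NormedAddCommGroup F] [NormedSpace ℝ F] {α : ℝ} (hα : 0 < α) (s n : ℕ) (T : E →L[ℝ] F)
    (hT : ‖T‖ ≤ n.factorial * Real.exp (n + 2)) (x : E) :
    α ^ s * ‖((1 : ℝ) / n.factorial) • T x‖ ≤
      Real.exp 2 * ((Real.exp 1 / α) ^ n * (α ^ (s + n) * ‖x‖)) := by
  have hfac : (0 : ℝ) < n.factorial := by positivity
  have hnorm : ‖((1 : ℝ) / n.factorial) • T x‖ ≤ Real.exp (n + 2) * ‖x‖ := by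
    rw [norm_smul, Real.norm_of_nonneg (by positivity), one_div, inv_mul_le_iff₀ hfac, ← mul_assoc]
    exact T.le_of_opNorm_le hT x
  have hexp : Real.exp (n + 2) = Real.exp 2 * Real.exp 1 ^ n := by
    rw [Real.exp_one_pow, ← Real.exp_add, add_comm]
  calc α ^ s * ‖((1 : ℝ) / n.factorial) • T x‖
      ≤ α ^ s * (Real.exp (n + 2) * ‖x‖) := by gcongr
    _ = Real.exp 2 * ((Real.exp 1 / α) ^ n * (α ^ (s + n) * ‖x‖)) := by
        rw [hexp, div_pow, pow_add]
        field_simp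

/-- If the cumulant operators `𝔄*_{1+n}(t)` (here `Op s n`, including the integration
over the variables `x_{s+1},…,x_{s+n}`, mapping the `(s+n)`-particle component to the
`s`-particle component) satisfy `‖𝔄*_{1+n}(t) f_{s+n}‖ ≤ n! e^(n+2) ‖f_{s+n}‖`, then for
`α > e` the series `Fₛ(t) = ∑_{n=0}^∞ (1/n!) 𝔄*_{1+n}(t) F⁰_{s+n}` converges in the norm
`‖F‖_{L¹_α} = ∑ₛ α^s ‖Fₛ‖`, and `‖F(t)‖_{L¹_α} ≤ e² (1 - e/α)⁻¹ ‖F(0)‖_{L¹_α}`. -/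
theorem BBGKY_series_convergence_estimate
    (W : ℕ → Type*) [∀ s, NormedAddCommGroup (W s)] [∀ s, NormedSpace ℝ (W s)]
    [∀ s, CompleteSpace (W s)]
    (α : ℝ) (hα : Real.exp 1 < α)
    (Op : (s : ℕ) → (n : ℕ) → W (s + n) →L[ℝ] W s)
    (hOp : ∀ s n : ℕ, ‖Op s n‖ ≤ n.factorial * Real.exp (n + 2))
    (F0 : (s : ℕ) → W s)
    (hF0 : Summable fun n => α ^ n * ‖F0 n‖) :
    (∀ s : ℕ, Summable fun n => ((1 : ℝ) / n.factorial) • Op s n (F0 (s + n))) ∧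
    (Summable fun s =>
      α ^ s * ‖∑' n : ℕ, ((1 : ℝ) / n.factorial) • Op s n (F0 (s + n))‖) ∧
    (∑' s : ℕ, α ^ s * ‖∑' n : ℕ, ((1 : ℝ) / n.factorial) • Op s n (F0 (s + n))‖)
      ≤ Real.exp 2 * (1 - Real.exp 1 / α)⁻¹ * ∑' n : ℕ, α ^ n * ‖F0 n‖ := by
  have hα0 : 0 < α := (Real.exp_pos 1).trans hα
  have hq0 : 0 ≤ Real.exp 1 / α := by positivity
  have hq1 : Real.exp 1 / α < 1 := (div_lt_one hα0).2 hα
  have hc0 (m : ℕ) : 0 ≤ α ^ m * ‖F0 m‖ := by positivity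
  obtain ⟨hrows, hsummable, hle⟩ := summable_weighted_norm_tsum_of_le
    (b := fun s n => Real.exp 2 * ((Real.exp 1 / α) ^ n * (α ^ (s + n) * ‖F0 (s + n)‖)))
    (fun s => pow_pos hα0 s)
    ((summable_uncurry_geometric_mul_nat_add hc0 hF0 hq0 hq1).mul_left (Real.exp 2))
    fun s n => weighted_norm_cumulant_term_le hα0 s n (Op s n) (hOp s n) (F0 (s + n))
  refine ⟨hrows, hsummable, hle.trans ?_⟩
  simp only [tsum_mul_left, mul_assoc]
  exact mul_le_mul_of_nonneg_left (tsum_tsum_geometric_mul_nat_add_le hc0 hF0 hq0 hq1)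
    (Real.exp_pos 2).le
end

section
/- For an isometric group of operators S(t) on L¹ with ‖Sₙ(t)‖ = 1, the (1+n)-th order cumulant 𝔄_{1+n}(t, {1,…,s}, s+1,…,s+n) = ∑_{P partition of ({1,…,s}, s+1,…,s+n)} (-1)^{|P|-1}(|P|-1)! ∏_{X∈P} S_{|θ(X)|}(t, θ(X)) satisfies the operator norm bound ‖𝔄_{1+n}(t)‖ ≤ ∑_{k=1}^{n+1} S(n+1,k)(k-1)! ≤ n! e^{n+2}. -/
/-!
Bounding every `O P` by `1`, the triangle inequality reduces the first estimate to
`∑_P (|P| - 1)!`. Grouping partitions by their number of blocks turns this into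
`∑_k S(n+1, k) (k-1)!`: erasing a point `a` from the blocks of a partition of `insert a s` gives
a partition `Q` of `s`, and the fibre over `Q` consists of `Q` with the new block `{a}` and the
`|Q|` partitions in which `a` joins a block of `Q`, which is the recurrence of the Stirling
numbers. For the second estimate, the same recurrence gives `F (m + 1) ≤ 2 (m + 1) F m` for
`F m = ∑_k S(m+1, k+1) k!`, so the sum is at most `2^n n! ≤ n! e^(n+2)`.
-/

/-- The set of partitions of a finite set `Z` into nonempty mutually disjoint blocks. -/
def partitionsOf {ι : Type*} [DecidableEq ι] (Z : Finset ι) : Finset (Finset (Finset ι)) :=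
  Z.powerset.powerset.filter
    (fun P => ∅ ∉ P ∧ P.sup id = Z ∧ ∀ X ∈ P, ∀ Y ∈ P, X ≠ Y → X ∩ Y = ∅)

/-- Stirling numbers of the second kind. -/
def stirling : ℕ → ℕ → ℕ
  | 0, 0 => 1
  | 0, _ + 1 => 0
  | _ + 1, 0 => 0
  | n + 1, k + 1 => (k + 1) * stirling n (k + 1) + stirling n k

open Finset

theorem stirling_eq_stirlingSecond : stirling = Nat.stirlingSecond := by
  funext n k
  induction n generalizing k with
  | zero => cases k <;> rfl
  | succ n ih => cases k <;> simp [stirling, Nat.stirlingSecond_succ_succ, ih]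

section Partitions

variable {ι : Type*} [DecidableEq ι] {s : Finset ι} {a : ι} {P Q : Finset (Finset ι)}
  {X : Finset ι}

theorem mem_partitionsOf :
    P ∈ partitionsOf s ↔ ∅ ∉ P ∧ (∀ X ∈ P, X ⊆ s) ∧ (∀ x ∈ s, ∃ X ∈ P, x ∈ X) ∧
      ∀ X ∈ P, ∀ Y ∈ P, ∀ x ∈ X, x ∈ Y → X = Y := by
  have hsup : P.sup id = s ↔ (∀ X ∈ P, X ⊆ s) ∧ ∀ x ∈ s, ∃ X ∈ P, x ∈ X := by
    simp only [Finset.ext_iff, mem_sup, id, subset_iff]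
    grind
  have hdisj : (∀ X ∈ P, ∀ Y ∈ P, X ≠ Y → X ∩ Y = ∅) ↔
      ∀ X ∈ P, ∀ Y ∈ P, ∀ x ∈ X, x ∈ Y → X = Y := by
    simp only [Finset.ext_iff, mem_inter, notMem_empty, iff_false, not_and]
    grind
  simp only [partitionsOf, mem_filter, mem_powerset, hsup, hdisj]
  exact ⟨fun ⟨_, hne, hP, hd⟩ => ⟨hne, hP.1, hP.2, hd⟩,
    fun ⟨hne, hsub, hcov, hd⟩ =>
      ⟨fun X hX => mem_powerset.mpr (hsub X hX), hne, ⟨hsub, hcov⟩, hd⟩⟩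

theorem notMem_of_mem_partitionsOf (hQ : Q ∈ partitionsOf s) (ha : a ∉ s) (hX : X ∈ Q) :
    a ∉ X :=
  fun h => ha ((mem_partitionsOf.mp hQ).2.1 X hX h)

def partitionErase (a : ι) (P : Finset (Finset ι)) : Finset (Finset ι) :=
  (P.image (·.erase a)).erase ∅

def insertIntoBlock (a : ι) (Q : Finset (Finset ι)) (X : Finset ι) : Finset (Finset ι) :=
  insert (insert a X) (Q.erase X)

theorem image_erase_eq_self (h : ∀ X ∈ Q, a ∉ X) : Q.image (·.erase a) = Q :=
  (image_congr fun X hX => erase_eq_of_notMem (h X hX)).trans image_id'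

theorem insert_singleton_mem_partitionsOf (ha : a ∉ s) (hQ : Q ∈ partitionsOf s) :
    insert {a} Q ∈ partitionsOf (insert a s) := by
  rw [mem_partitionsOf] at *
  grind

theorem insertIntoBlock_mem_partitionsOf (ha : a ∉ s) (hQ : Q ∈ partitionsOf s) (hX : X ∈ Q) :
    insertIntoBlock a Q X ∈ partitionsOf (insert a s) := by
  rw [insertIntoBlock, mem_partitionsOf] at *
  grind

theorem partitionErase_insert_singleton (ha : a ∉ s) (hQ : Q ∈ partitionsOf s) :
    partitionErase a (insert {a} Q) = Q := by
  rw [partitionErase, image_insert,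
    image_erase_eq_self fun X => notMem_of_mem_partitionsOf hQ ha, erase_singleton,
    erase_insert (mem_partitionsOf.mp hQ).1]

theorem partitionErase_insertIntoBlock (ha : a ∉ s) (hQ : Q ∈ partitionsOf s) (hX : X ∈ Q) :
    partitionErase a (insertIntoBlock a Q X) = Q := by
  have hnot : ∀ Y ∈ Q, a ∉ Y := fun Y => notMem_of_mem_partitionsOf hQ ha
  rw [partitionErase, insertIntoBlock, image_insert, erase_insert (hnot X hX),
    image_erase_eq_self fun Y hY => hnot Y (mem_of_mem_erase hY), insert_erase hX,
    erase_eq_of_notMem (mem_partitionsOf.mp hQ).1]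

theorem card_insert_singleton (ha : a ∉ s) (hQ : Q ∈ partitionsOf s) :
    (insert {a} Q).card = Q.card + 1 :=
  card_insert_of_notMem fun h => notMem_of_mem_partitionsOf hQ ha h (mem_singleton_self a)

theorem card_insertIntoBlock (ha : a ∉ s) (hQ : Q ∈ partitionsOf s) (hX : X ∈ Q) :
    (insertIntoBlock a Q X).card = Q.card := by
  have : insert a X ∉ Q.erase X := fun h =>
    notMem_of_mem_partitionsOf hQ ha (mem_of_mem_erase h) (mem_insert_self a X)
  rw [insertIntoBlock, card_insert_of_notMem this, card_erase_add_one hX]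

theorem insertIntoBlock_injOn (ha : a ∉ s) (hQ : Q ∈ partitionsOf s) :
    Set.InjOn (insertIntoBlock a Q) Q := by
  intro X hX Y hY h
  have hXY : insert a X ∈ insertIntoBlock a Q Y := h ▸ mem_insert_self _ _
  rcases mem_insert.mp hXY with h' | h'
  · rw [← erase_insert (notMem_of_mem_partitionsOf hQ ha hX),
      ← erase_insert (notMem_of_mem_partitionsOf hQ ha hY), h']
  · exact absurd (mem_insert_self a X) (notMem_of_mem_partitionsOf hQ ha (mem_of_mem_erase h'))

theorem exists_eq_insert_singleton_or_insertIntoBlock (ha : a ∉ s)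
    (hP : P ∈ partitionsOf (insert a s)) :
    ∃ Q ∈ partitionsOf s, P = insert {a} Q ∨ ∃ X ∈ Q, P = insertIntoBlock a Q X := by
  rw [mem_partitionsOf] at hP
  obtain ⟨B, hB, haB⟩ := hP.2.2.1 a (mem_insert_self a s)
  by_cases hBa : B = {a}
  · subst hBa
    refine ⟨P.erase {a}, ?_, .inl (insert_erase hB).symm⟩
    rw [mem_partitionsOf]
    grind
  · refine ⟨insert (B.erase a) (P.erase B), ?_, .inr ⟨B.erase a, mem_insert_self _ _, ?_⟩⟩
    · rw [mem_partitionsOf]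
      grind
    · have hnew : B.erase a ∉ P.erase B := by grind
      rw [insertIntoBlock, insert_erase haB, erase_insert hnew, insert_erase hB]

theorem filter_partitionErase_eq (ha : a ∉ s) (hQ : Q ∈ partitionsOf s) :
    (partitionsOf (insert a s)).filter (partitionErase a · = Q) =
      insert (insert {a} Q) (Q.image (insertIntoBlock a Q)) := by
  ext P
  simp only [mem_filter, mem_insert, mem_image]
  constructor
  · rintro ⟨hP, rfl⟩
    obtain ⟨Q', hQ', rfl | ⟨X, hX, rfl⟩⟩ := exists_eq_insert_singleton_or_insertIntoBlock ha hP
    · rw [partitionErase_insert_singleton ha hQ']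
      exact .inl rfl
    · rw [partitionErase_insertIntoBlock ha hQ' hX]
      exact .inr ⟨X, hX, rfl⟩
  · rintro (rfl | ⟨X, hX, rfl⟩)
    · exact ⟨insert_singleton_mem_partitionsOf ha hQ, partitionErase_insert_singleton ha hQ⟩
    · exact ⟨insertIntoBlock_mem_partitionsOf ha hQ hX, partitionErase_insertIntoBlock ha hQ hX⟩

theorem sum_partitionsOf_insert {M : Type*} [AddCommMonoid M] (ha : a ∉ s) (f : ℕ → M) :
    ∑ P ∈ partitionsOf (insert a s), f P.card =
      ∑ Q ∈ partitionsOf s, (f (Q.card + 1) + Q.card • f Q.card) := by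
  have hmaps : ∀ P ∈ partitionsOf (insert a s), partitionErase a P ∈ partitionsOf s := by
    intro P hP
    obtain ⟨Q, hQ, rfl | ⟨X, hX, rfl⟩⟩ := exists_eq_insert_singleton_or_insertIntoBlock ha hP
    · rwa [partitionErase_insert_singleton ha hQ]
    · rwa [partitionErase_insertIntoBlock ha hQ hX]
  rw [← sum_fiberwise_of_maps_to hmaps]
  refine sum_congr rfl fun Q hQ => ?_
  have hnotMem : insert {a} Q ∉ Q.image (insertIntoBlock a Q) := by
    simp only [mem_image, not_exists, not_and]
    intro X hX h
    have := congrArg card h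
    rw [card_insert_singleton ha hQ, card_insertIntoBlock ha hQ hX] at this
    omega
  rw [filter_partitionErase_eq ha hQ, sum_insert hnotMem,
    sum_image (insertIntoBlock_injOn ha hQ), card_insert_singleton ha hQ,
    sum_congr rfl fun X hX => by rw [card_insertIntoBlock ha hQ hX], sum_const]

theorem partitionsOf_empty : partitionsOf (∅ : Finset ι) = {∅} := by
  ext P
  rw [mem_partitionsOf, mem_singleton]
  grind [subset_empty]

end Partitions

theorem sum_range_stirlingSecond_succ_smul {M : Type*} [AddCommMonoid M] (m : ℕ) (f : ℕ → M) :
    ∑ k ∈ range (m + 2), Nat.stirlingSecond (m + 1) k • f k =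
      ∑ k ∈ range (m + 1), Nat.stirlingSecond m k • (f (k + 1) + k • f k) := by
  have hshift : ∑ k ∈ range (m + 1), ((k + 1) * Nat.stirlingSecond m (k + 1)) • f (k + 1) =
      ∑ k ∈ range (m + 1), (k * Nat.stirlingSecond m k) • f k := by
    have h := (sum_range_succ' (fun k => (k * Nat.stirlingSecond m k) • f k) (m + 1)).symm.trans
      (sum_range_succ _ (m + 1))
    simpa [Nat.stirlingSecond_eq_zero_of_lt (Nat.lt_succ_self m)] using h
  simp only [sum_range_succ' _ (m + 1), Nat.stirlingSecond_succ_zero, zero_smul, add_zero,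
    Nat.stirlingSecond_succ_succ, add_smul, sum_add_distrib, hshift, smul_add, smul_smul]
  simp only [add_comm, mul_comm]

theorem sum_partitionsOf_comp_card {ι M : Type*} [DecidableEq ι] [AddCommMonoid M]
    (s : Finset ι) (f : ℕ → M) :
    ∑ P ∈ partitionsOf s, f P.card =
      ∑ k ∈ range (s.card + 1), Nat.stirlingSecond s.card k • f k := by
  induction s using Finset.induction_on generalizing f with
  | empty => simp [partitionsOf_empty]
  | insert a s ha ih =>
    rw [sum_partitionsOf_insert ha, card_insert_of_notMem ha, sum_range_stirlingSecond_succ_smul]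
    exact ih fun k => f (k + 1) + k • f k

theorem sum_Icc_stirling_mul_factorial_eq (m : ℕ) :
    ∑ k ∈ Icc 1 (m + 1), stirling (m + 1) k * (k - 1).factorial =
      ∑ k ∈ range (m + 1), Nat.stirlingSecond (m + 1) (k + 1) * k.factorial := by
  rw [stirling_eq_stirlingSecond, range_eq_Ico]
  exact (sum_Ico_add' _ 0 (m + 1) 1).symm

theorem sum_partitionsOf_factorial_card_sub_one {ι : Type*} [DecidableEq ι] {s : Finset ι}
    (hs : s.Nonempty) :
    ∑ P ∈ partitionsOf s, (P.card - 1).factorial =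
      ∑ k ∈ Icc 1 s.card, stirling s.card k * (k - 1).factorial := by
  obtain ⟨m, hm⟩ := Nat.exists_eq_add_one_of_ne_zero hs.card_pos.ne'
  rw [sum_partitionsOf_comp_card s fun k => (k - 1).factorial, hm, sum_range_succ',
    sum_Icc_stirling_mul_factorial_eq]
  simp

theorem sum_range_stirlingSecond_succ_mul_factorial_le (m : ℕ) :
    ∑ k ∈ range (m + 1), Nat.stirlingSecond (m + 1) (k + 1) * k.factorial ≤
      2 ^ m * m.factorial := by
  induction m with
  | zero => simp [Nat.stirlingSecond_one_right]
  | succ m ih =>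
    set a := fun k => Nat.stirlingSecond (m + 1) (k + 1) * k.factorial with ha
    have hweighted :
        ∑ k ∈ range (m + 1), (k + 1) * a k ≤ (m + 1) * ∑ k ∈ range (m + 1), a k := by
      rw [mul_sum]
      exact sum_le_sum fun k hk => Nat.mul_le_mul_right _ (by simp at hk; omega)
    have hfirst :
        ∑ k ∈ range (m + 2), (k + 1) * Nat.stirlingSecond (m + 1) (k + 1) * k.factorial =
          ∑ k ∈ range (m + 1), (k + 1) * a k := by
      simp [ha, sum_range_succ _ (m + 1), Nat.stirlingSecond_eq_zero_of_lt, mul_assoc]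
    have hsecond : ∑ k ∈ range (m + 2), Nat.stirlingSecond (m + 1) k * k.factorial =
        ∑ k ∈ range (m + 1), (k + 1) * a k := by
      simp only [ha, sum_range_succ' _ (m + 1), Nat.stirlingSecond_succ_zero, zero_mul,
        add_zero, Nat.factorial_succ]
      exact sum_congr rfl fun k _ => by ring
    calc ∑ k ∈ range (m + 2), Nat.stirlingSecond (m + 2) (k + 1) * k.factorial
        = ∑ k ∈ range (m + 2), (k + 1) * Nat.stirlingSecond (m + 1) (k + 1) * k.factorial +
            ∑ k ∈ range (m + 2), Nat.stirlingSecond (m + 1) k * k.factorial := by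
          simp only [Nat.stirlingSecond_succ_succ, add_mul, sum_add_distrib]
      _ ≤ 2 * (m + 1) * ∑ k ∈ range (m + 1), a k := by
          rw [hfirst, hsecond]
          linarith
      _ ≤ 2 ^ (m + 1) * (m + 1).factorial := by
          rw [pow_succ, Nat.factorial_succ]
          nlinarith

theorem two_pow_le_exp (n : ℕ) : (2 : ℝ) ^ n ≤ Real.exp n :=
  calc (2 : ℝ) ^ n ≤ Real.exp 1 ^ n :=
        pow_le_pow_left₀ zero_le_two (by linarith [Real.add_one_le_exp 1]) n
    _ = Real.exp n := Real.exp_one_pow n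

/-- For an isometric group of operators, the `(1+n)`-th order cumulant
`𝔄_{1+n}(t) = ∑_{P partition of the (n+1)-element index set} (-1)^(|P|-1) (|P|-1)! ∏_{X∈P} S(t)`
(where the product of groups of operators `O P` over a partition `P` has norm at most `1`)
satisfies `‖𝔄_{1+n}(t)‖ ≤ ∑_{k=1}^{n+1} S(n+1,k) (k-1)! ≤ n! e^(n+2)`. -/
theorem cumulant_norm_bound {E : Type*} [NormedAddCommGroup E] [NormedSpace ℝ E]
    (n : ℕ) (O : Finset (Finset (Fin (n + 1))) → E →L[ℝ] E)
    (hO : ∀ P ∈ partitionsOf (Finset.univ : Finset (Fin (n + 1))), ‖O P‖ ≤ 1) :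
    ‖∑ P ∈ partitionsOf (Finset.univ : Finset (Fin (n + 1))),
        ((-1 : ℝ) ^ (P.card - 1) * ((P.card - 1).factorial : ℝ)) • O P‖
        ≤ (∑ k ∈ Finset.Icc 1 (n + 1), (stirling (n + 1) k * (k - 1).factorial : ℕ) : ℝ) ∧
    ((∑ k ∈ Finset.Icc 1 (n + 1), (stirling (n + 1) k * (k - 1).factorial : ℕ) : ℕ) : ℝ)
      ≤ n.factorial * Real.exp (n + 2) := by
  have hcount := sum_partitionsOf_factorial_card_sub_one (univ_nonempty (α := Fin (n + 1)))
  rw [card_univ, Fintype.card_fin] at hcount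
  constructor
  · calc _ ≤ ∑ P ∈ partitionsOf (univ : Finset (Fin (n + 1))),
            ‖((-1 : ℝ) ^ (P.card - 1) * ((P.card - 1).factorial : ℝ)) • O P‖ := norm_sum_le _ _
      _ ≤ ∑ P ∈ partitionsOf (univ : Finset (Fin (n + 1))), ((P.card - 1).factorial : ℝ) :=
          sum_le_sum fun P hP => by
            rw [norm_smul, norm_mul, norm_pow, norm_neg, norm_one, one_pow, one_mul,
              Real.norm_natCast]
            exact mul_le_of_le_one_right (by positivity) (hO P hP)
      _ = _ := by exact_mod_cast hcount
  · calc _ ≤ ((2 ^ n * n.factorial : ℕ) : ℝ) := by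
          rw [sum_Icc_stirling_mul_factorial_eq]
          exact_mod_cast sum_range_stirlingSecond_succ_mul_factorial_le n
      _ ≤ n.factorial * Real.exp (n + 2) := by
          push_cast
          rw [mul_comm]
          gcongr
          exact (two_pow_le_exp n).trans (Real.exp_le_exp.mpr (by linarith))
end
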